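/- The m-Tamari lattice T_n^{(m)} on m-ballot paths of size n is isomorphic to the upper ideal of the ordinary Tamari lattice on binary trees with nm nodes generated by the (n,m)-comb, i.e., the binary tree with n nodes on its leftmost branch each of whose right subtrees is a chain of m−1 right children. -/

import Mathlib

/-!
Under the bijection `Tree0.word` between binary trees and Dyck paths, a tree rotation is
exactly the exchange of an east step with the primitive Dyck path following it, i.e. a
rotation of 1-ballot paths. Replacing every north step by `m` north steps (`expandNorth m`)
maps `m`-primitive paths to 1-primitive ones, hence `m`-rotations to 1-rotations, and every
1-rotation of an expanded path is the expansion of an `m`-rotation. So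
`word t = expandNorth m p` is a bijective bisimulation between path rotations and tree
rotations; it relates the lowest path `(N E^m)^n` to the `(n,m)`-comb, and every `m`-ballot
path is reached from the lowest one, because undoing the rotation at a factor `N E^m E`
keeps the path ballot and lowers the number of pairs of a north step before an east step.
-/

/-- Unlabelled binary trees. -/
inductive Tree0 where
  | leaf : Tree0
  | node : Tree0 → Tree0 → Tree0
deriving DecidableEq

namespace Tree0

/-- Number of nodes. -/
def size : Tree0 → ℕ
  | leaf => 0
  | node l r => size l + size r + 1

/-- One right rotation somewhere in the tree: `y(x(A,B),C) ↦ x(A,y(B,C))`. -/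
inductive Rot : Tree0 → Tree0 → Prop
  | root (A B C : Tree0) : Rot (node (node A B) C) (node A (node B C))
  | left {l l' : Tree0} (r : Tree0) : Rot l l' → Rot (node l r) (node l' r)
  | right (l : Tree0) {r r' : Tree0} : Rot r r' → Rot (node l r) (node l r')

/-- The Tamari order: transitive closure of right rotation. -/
def tamariLE : Tree0 → Tree0 → Prop := Relation.ReflTransGen Rot

/-- A chain of `k` right children (no left children). -/
def rightChain : ℕ → Tree0
  | 0 => leaf
  | k + 1 => node leaf (rightChain k)

/-- The `(n,m)`-comb: `n` nodes on the leftmost branch, each of whose right subtrees is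
a chain of `m-1` right children. -/
def comb : ℕ → ℕ → Tree0
  | 0, _ => leaf
  | n + 1, m => node (comb n m) (rightChain (m - 1))

end Tree0

/-- Paths with north (`true`) and east (`false`) unit steps. `p` is an `m`-ballot path
of size `n` if it has `n` north steps, `mn` east steps, and stays weakly above the
line `y = x/m` (each prefix has at most `m` times as many east steps as north steps). -/
def IsBallot (m n : ℕ) (p : List Bool) : Prop :=
  p.count true = n ∧ p.count false = m * n ∧
    ∀ q : List Bool, q <+: p → q.count false ≤ m * q.count true

/-- A primitive path: nonempty, ends on the line `y = x/m`, and every proper nonempty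
prefix stays strictly above the line. -/
def IsPrimitive (m : ℕ) (p : List Bool) : Prop :=
  p ≠ [] ∧ p.count false = m * p.count true ∧
    ∀ q : List Bool, q <+: p → q ≠ [] → q ≠ p → q.count false < m * q.count true

/-- Rotation on paths: exchange an east step with the primitive subpath following it. -/
def PathRot (m : ℕ) (p q : List Bool) : Prop :=
  ∃ u d v : List Bool, IsPrimitive m d ∧
    p = u ++ false :: (d ++ v) ∧ q = u ++ d ++ false :: v

namespace Relation

variable {α β : Type*} {r : α → α → Prop} {s : β → β → Prop}

theorem ReflTransGen.exists_of_simulation {C : α → β → Prop}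
    (hsim : ∀ ⦃a a' b⦄, C a b → r a a' → ∃ b', C a' b' ∧ s b b')
    {a a' : α} {b : β} (h : ReflTransGen r a a') (hab : C a b) :
    ∃ b', C a' b' ∧ ReflTransGen s b b' := by
  induction h with
  | refl => exact ⟨b, hab, .refl⟩
  | tail _ hr ih =>
    obtain ⟨b₁, hC₁, hs₁⟩ := ih
    obtain ⟨b₂, hC₂, hs₂⟩ := hsim hC₁ hr
    exact ⟨b₂, hC₂, hs₁.tail hs₂⟩

theorem reflTransGen_subtype_iff {p : α → Prop} (hp : ∀ ⦃a b⦄, r a b → p a → p b)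
    {a b : Subtype p} :
    ReflTransGen (fun x y : Subtype p => r x y) a b ↔ ReflTransGen r a b := by
  refine ⟨fun h => ReflTransGen.lift Subtype.val (fun _ _ h => h) a b h, fun h => ?_⟩
  suffices ∀ c, ReflTransGen r a c →
      ∃ hc : p c, ReflTransGen (fun x y : Subtype p => r x y) a ⟨c, hc⟩ from (this _ h).2
  intro c hc
  induction hc with
  | refl => exact ⟨a.2, .refl⟩
  | tail _ hr ih =>
    obtain ⟨hx, hax⟩ := ih
    exact ⟨hp hr hx, hax.tail hr⟩

theorem exists_equiv_reachable_of_bisimulation {C : α → β → Prop}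
    (hrs : ∀ ⦃a a' b⦄, C a b → r a a' → ∃ b', C a' b' ∧ s b b')
    (hsr : ∀ ⦃b b' a⦄, C a b → s b b' → ∃ a', C a' b' ∧ r a a')
    (hl : ∀ ⦃a a' b⦄, C a b → C a' b → a = a') (hr : ∀ ⦃a b b'⦄, C a b → C a b' → b = b')
    {a₀ : α} {b₀ : β} (h₀ : C a₀ b₀) :
    ∃ f : {a // ReflTransGen r a₀ a} ≃ {b // ReflTransGen s b₀ b},
      ∀ a a', ReflTransGen r a.1 a'.1 ↔ ReflTransGen s (f a).1 (f a').1 := by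
  have hf (a : {a // ReflTransGen r a₀ a}) : ∃ b : {b // ReflTransGen s b₀ b}, C a b :=
    let ⟨b, hC, hb⟩ := a.2.exists_of_simulation hrs h₀
    ⟨⟨b, hb⟩, hC⟩
  have hg (b : {b // ReflTransGen s b₀ b}) : ∃ a : {a // ReflTransGen r a₀ a}, C a b :=
    let ⟨a, hC, ha⟩ := b.2.exists_of_simulation (C := fun b a => C a b) hsr h₀
    ⟨⟨a, ha⟩, hC⟩
  choose f hf using hf
  choose g hg using hg
  refine ⟨⟨f, g, fun a => Subtype.ext (hl (hg (f a)) (hf a)),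
    fun b => Subtype.ext (hr (hf (g b)) (hg b))⟩, fun a a' => ⟨fun h => ?_, fun h => ?_⟩⟩
  · obtain ⟨b', hC, hb'⟩ := h.exists_of_simulation hrs (hf a)
    change ReflTransGen s (f a) (f a')
    rwa [hr (hf a') hC]
  · obtain ⟨a'', hC, ha''⟩ := h.exists_of_simulation (C := fun b a => C a b) hsr (hf a)
    rwa [hl (hf a') hC]

end Relation

theorem List.prefix_or_of_prefix_append {α : Type*} {w x y : List α} (h : w <+: x ++ y) :
    w <+: x ∨ ∃ z, w = x ++ z ∧ z <+: y := by
  obtain ⟨t, ht⟩ := h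
  rcases List.append_eq_append_iff.1 ht.symm with ⟨z, rfl, hz⟩ | ⟨z, rfl, -⟩
  · exact Or.inr ⟨z, rfl, t, hz.symm⟩
  · exact Or.inl (List.prefix_append _ _)

namespace IsPrimitive

variable {m : ℕ} {d : List Bool}

theorem count_false_le (hd : IsPrimitive m d) {q : List Bool} (hq : q <+: d) :
    q.count false ≤ m * q.count true := by
  rcases eq_or_ne q [] with rfl | hne
  · simp
  rcases eq_or_ne q d with rfl | hqd
  · exact hd.2.1.le
  · exact (hd.2.2 q hq hne hqd).le

theorem count_true_pos (hd : IsPrimitive m d) : 0 < d.count true := by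
  refine Nat.pos_of_ne_zero fun h0 => hd.1 (List.eq_nil_iff_forall_not_mem.2 fun b hb => ?_)
  have hf : d.count false = 0 := by rw [hd.2.1, h0, mul_zero]
  cases b <;> simp_all [List.count_eq_zero]

theorem eq_append_false (hm : 0 < m) (hd : IsPrimitive m d) : ∃ d', d = d' ++ [false] := by
  obtain ⟨d', c, rfl⟩ := (List.eq_nil_or_concat' d).resolve_left hd.1
  cases c
  · exact ⟨d', rfl⟩
  have hbal := hd.2.1
  rcases eq_or_ne d' [] with rfl | hne
  · simp at hbal; omega
  have := hd.2.2 d' (List.prefix_append _ _) hne (by simp)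
  simp [Nat.mul_add] at hbal; omega

end IsPrimitive

theorem isPrimitive_north_east_pow (m : ℕ) : IsPrimitive m (true :: List.replicate m false) := by
  refine ⟨by simp, by simp [List.count_replicate], fun q hq hne hqd => ?_⟩
  rcases List.prefix_cons_iff.1 hq with rfl | ⟨q, rfl, hq'⟩
  · exact absurd rfl hne
  obtain ⟨k, hk, rfl⟩ : ∃ k ≤ m, q = List.replicate k false :=
    ⟨q.length, by simpa using hq'.length_le, List.eq_replicate_iff.2 ⟨rfl,
      fun b hb => List.eq_of_mem_replicate (hq'.subset hb)⟩⟩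
  have : k ≠ m := by rintro rfl; exact hqd rfl
  simp [List.count_replicate]; omega

namespace Tree0

def word : Tree0 → List Bool
  | leaf => []
  | node l r => word l ++ true :: (word r ++ [false])

@[simp] theorem word_leaf : word leaf = [] := rfl

@[simp] theorem word_node (l r : Tree0) :
    word (node l r) = word l ++ true :: (word r ++ [false]) := rfl

theorem word_rightChain (k : ℕ) :
    word (rightChain k) = List.replicate k true ++ List.replicate k false := by
  induction k with
  | zero => rfl
  | succ k ih => rw [rightChain, word_node, ih, List.replicate_succ, List.replicate_succ']; simp

@[simp] theorem count_true_word (t : Tree0) : (word t).count true = t.size := by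
  induction t with
  | leaf => rfl
  | node l r ihl ihr => simp [size, ihl, ihr]; omega

@[simp] theorem count_false_word (t : Tree0) : (word t).count false = t.size := by
  induction t with
  | leaf => rfl
  | node l r ihl ihr => simp [size, ihl, ihr]; omega

theorem count_false_le_of_prefix_word {t : Tree0} {q : List Bool} (hq : q <+: word t) :
    q.count false ≤ q.count true := by
  induction t generalizing q with
  | leaf => simp_all
  | node l r ihl ihr =>
    rcases List.prefix_or_of_prefix_append hq with hl | ⟨q, rfl, hq₁⟩
    · exact ihl hl
    rcases List.prefix_cons_iff.1 hq₁ with rfl | ⟨q, rfl, hq₂⟩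
    · simp
    rcases List.prefix_concat_iff.1 hq₂ with rfl | hr
    · simp
    · have := ihr hr
      simp; omega

theorem count_true_le_of_word_eq_append {t : Tree0} {x y : List Bool} (h : word t = x ++ y) :
    y.count true ≤ y.count false := by
  have hx := count_false_le_of_prefix_word (h ▸ List.prefix_append x y)
  have ht := congrArg (List.count true) h
  have hf := congrArg (List.count false) h
  simp only [count_true_word, count_false_word, List.count_append] at ht hf
  omega

theorem isPrimitive_word_node_leaf (t : Tree0) : IsPrimitive 1 (word (node leaf t)) := by
  refine ⟨by simp, by simp, fun q hq hne hqt => ?_⟩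
  rw [word_node, word_leaf, List.nil_append] at hq hqt
  rcases List.prefix_cons_iff.1 hq with rfl | ⟨q, rfl, hq₁⟩
  · exact absurd rfl hne
  rcases List.prefix_concat_iff.1 hq₁ with rfl | hq₂
  · exact absurd rfl hqt
  · have := count_false_le_of_prefix_word hq₂
    simp; omega

/-- Otherwise `word l' = word l ++ true :: x` with `x` a prefix of `word r`, so `word l'` would
have more north than east steps. -/
theorem eq_nil_of_word_eq_word_append {l r l' r' : Tree0} {a : List Bool}
    (h : word (node l r) = word (node l' r')) (hl : word l' = word l ++ a) : a = [] := by
  rw [word_node, word_node, hl, List.append_assoc, List.append_cancel_left_eq] at h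
  rcases a with _ | ⟨b, x⟩
  · rfl
  obtain ⟨rfl, hx⟩ : true = b ∧ word r ++ [false] = x ++ true :: (word r' ++ [false]) := by
    simpa using h
  have hr : word r = x ++ true :: word r' := List.append_cancel_right (hx.trans (by simp))
  have hx := count_false_le_of_prefix_word (hr ▸ List.prefix_append x _)
  have ht := congrArg (List.count true) hl
  have hf := congrArg (List.count false) hl
  simp at ht hf
  omega

theorem word_injective : Function.Injective word := by
  intro t t' h
  induction t generalizing t' with
  | leaf => cases t' <;> simp_all
  | node l r ihl ihr =>
    cases t' with
    | leaf => simp at h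
    | node l' r' =>
      obtain rfl : l = l' := ihl <| by
        rcases List.append_eq_append_iff.1 h with ⟨a, hl, -⟩ | ⟨a, hl, -⟩
        · rw [hl, eq_nil_of_word_eq_word_append h hl, List.append_nil]
        · rw [hl, eq_nil_of_word_eq_word_append h.symm hl, List.append_nil]
      simp only [word_node, List.append_cancel_left_eq, List.cons.injEq, true_and,
        List.append_cancel_right_eq] at h
      rw [ihr h]

theorem Rot.pathRot_word {t t' : Tree0} (h : Rot t t') : PathRot 1 (word t) (word t') := by
  induction h with
  | root A B C =>
    exact ⟨word A ++ true :: word B, word (node leaf C), [], isPrimitive_word_node_leaf C,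
      by simp, by simp⟩
  | left r _ ih =>
    obtain ⟨u, d, v, hd, h, h'⟩ := ih
    exact ⟨u, d, v ++ true :: (word r ++ [false]), hd, by simp [h], by simp [h']⟩
  | right l _ ih =>
    obtain ⟨u, d, v, hd, h, h'⟩ := ih
    exact ⟨word l ++ true :: u, d, v ++ [false], hd, by simp [h], by simp [h']⟩

theorem exists_rot_at_root {l r : Tree0} {u k j v : List Bool} (hd : IsPrimitive 1 (k ++ true :: j))
    (hl : word l = u ++ false :: k) (hj : word r ++ [false] = j ++ v) :
    ∃ t', Rot (node l r) t' ∧ word t' = u ++ (k ++ true :: j) ++ false :: v := by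
  have hbal := hd.2.1
  have hk := hd.count_false_le (List.prefix_append k _)
  obtain rfl : v = [] := by
    by_contra hv
    obtain ⟨v, c, rfl⟩ := (List.eq_nil_or_concat' v).resolve_left hv
    have hr : word r = j ++ v := (List.append_inj' (hj.trans (List.append_assoc _ _ _).symm) rfl).1
    have := count_false_le_of_prefix_word (hr ▸ List.prefix_append j v)
    simp at hbal; omega
  obtain rfl : j = word r ++ [false] := by simpa using hj.symm
  obtain rfl : k = [] := by
    by_contra hk0
    have := hd.2.2 k (List.prefix_append _ _) hk0 (by simp)
    simp at hbal this; omega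
  cases l with
  | leaf => simp at hl
  | node l₁ l₂ =>
    have hu : u = word l₁ ++ true :: word l₂ := List.append_cancel_right (hl.symm.trans (by simp))
    exact ⟨node l₁ (node l₂ r), .root l₁ l₂ r, by simp [hu]⟩

theorem eq_append_false_of_word_append_false_eq {r : Tree0} {k d v : List Bool}
    (hd : IsPrimitive 1 d) (h : word r ++ [false] = k ++ false :: (d ++ v)) :
    ∃ v', v = v' ++ [false] ∧ word r = k ++ false :: (d ++ v') := by
  rcases List.eq_nil_or_concat' v with rfl | ⟨v', c, rfl⟩
  · obtain ⟨d', rfl⟩ := hd.eq_append_false one_pos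
    have hr : word r = (k ++ [false]) ++ d' := List.append_cancel_right (h.trans (by simp))
    have := count_true_le_of_word_eq_append hr
    have hbal := hd.2.1
    simp at hbal; omega
  · have h' : word r ++ [false] = (k ++ false :: (d ++ v')) ++ [c] := h.trans (by simp)
    obtain ⟨hr, hc⟩ := List.append_inj' h' rfl
    injection hc with hc
    exact ⟨v', by rw [hc], hr⟩

theorem exists_rot_of_word_eq {t : Tree0} {u d v : List Bool} (hd : IsPrimitive 1 d)
    (h : word t = u ++ false :: (d ++ v)) : ∃ t', Rot t t' ∧ word t' = u ++ d ++ false :: v := by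
  induction t generalizing u v with
  | leaf => simp at h
  | node l r ihl ihr =>
    rw [word_node] at h
    -- the east step lies in `word r`, or in `word l` with `d` ending inside `word l`, or in
    -- `word l` with `d` reaching beyond it (a rotation at the root)
    rcases List.append_eq_append_iff.1 h with ⟨a, rfl, ha⟩ | ⟨a, hl, ha⟩
    · obtain ⟨k, rfl⟩ : ∃ k, a = true :: k := by cases a <;> simp_all
      simp only [List.cons_append, List.cons.injEq, true_and] at ha
      obtain ⟨v, rfl, hr⟩ := eq_append_false_of_word_append_false_eq hd ha
      obtain ⟨r', hrot, hr'⟩ := ihr hr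
      exact ⟨node l r', hrot.right l, by simp [hr']⟩
    obtain ⟨k, rfl⟩ : ∃ k, a = false :: k := by cases a <;> simp_all
    have left {j : List Bool} (hl : word l = u ++ false :: (d ++ j))
        (hv : v = j ++ true :: (word r ++ [false])) :
        ∃ t', Rot (node l r) t' ∧ word t' = u ++ d ++ false :: v := by
      obtain ⟨l', hrot, hl'⟩ := ihl hl
      exact ⟨node l' r, hrot.left r, by simp [hl', hv]⟩
    simp only [List.cons_append, List.cons.injEq, true_and] at ha
    rcases List.append_eq_append_iff.1 ha with ⟨j, rfl, hv⟩ | ⟨j, rfl, hj⟩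
    · exact left (by simpa using hl) hv
    rcases j with _ | ⟨b, j⟩
    · exact left (j := []) (by simpa using hl) (by simpa using hj.symm)
    obtain ⟨rfl, hr⟩ : true = b ∧ word r ++ [false] = j ++ v := by simpa using hj
    exact exists_rot_at_root hd hl hr

end Tree0

section ExpandNorth

variable {m : ℕ}

def expandNorth (m : ℕ) (p : List Bool) : List Bool :=
  p.flatMap fun b => if b then List.replicate m true else [false]

@[simp] theorem expandNorth_nil : expandNorth m [] = [] := rfl

@[simp] theorem expandNorth_cons_true (p : List Bool) :
    expandNorth m (true :: p) = List.replicate m true ++ expandNorth m p := by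
  simp [expandNorth]

@[simp] theorem expandNorth_cons_false (p : List Bool) :
    expandNorth m (false :: p) = false :: expandNorth m p := by
  simp [expandNorth]

@[simp] theorem expandNorth_append (p q : List Bool) :
    expandNorth m (p ++ q) = expandNorth m p ++ expandNorth m q :=
  List.flatMap_append

@[simp] theorem count_true_expandNorth (p : List Bool) :
    (expandNorth m p).count true = m * p.count true := by
  induction p with
  | nil => simp
  | cons b p ih => cases b <;> simp [ih, Nat.mul_add, Nat.add_comm]

@[simp] theorem count_false_expandNorth (p : List Bool) :
    (expandNorth m p).count false = p.count false := by
  induction p with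
  | nil => simp
  | cons b p ih => cases b <;> simp [ih, List.count_replicate]

@[simp] theorem expandNorth_replicate_false (k : ℕ) :
    expandNorth m (List.replicate k false) = List.replicate k false := by
  induction k with
  | zero => rfl
  | succ k ih => simp [List.replicate_succ, ih]

theorem expandNorth_eq_nil_iff (hm : 0 < m) {p : List Bool} : expandNorth m p = [] ↔ p = [] := by
  rcases p with _ | ⟨_ | _, p⟩ <;> simp; omega

theorem expandNorth_injective (hm : 0 < m) : Function.Injective (expandNorth m) := by
  obtain ⟨m, rfl⟩ : ∃ k, m = k + 1 := ⟨m - 1, by omega⟩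
  intro p q h
  induction p generalizing q with
  | nil => exact ((expandNorth_eq_nil_iff hm).1 h.symm).symm
  | cons a p ih =>
    rcases q with _ | ⟨b, q⟩
    · exact (expandNorth_eq_nil_iff hm).1 h
    cases a <;> cases b <;> simp [List.replicate_succ] at h ⊢ <;> exact ih h

theorem exists_eq_expandNorth_of_prefix {p w : List Bool} (hw : w <+: expandNorth m p) :
    ∃ p' j, p' <+: p ∧ w = expandNorth m p' ++ List.replicate j true := by
  induction p generalizing w with
  | nil => exact ⟨[], 0, by simp_all⟩
  | cons b p ih =>
    cases b
    · rcases List.prefix_cons_iff.1 hw with rfl | ⟨w, rfl, hw'⟩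
      · exact ⟨[], 0, by simp⟩
      obtain ⟨p', j, hp', rfl⟩ := ih hw'
      exact ⟨false :: p', j, by simpa using hp', by simp⟩
    · rcases List.prefix_or_of_prefix_append hw with hw' | ⟨w, rfl, hw'⟩
      · exact ⟨[], w.length, by simp, List.eq_replicate_iff.2 ⟨rfl,
          fun b hb => List.eq_of_mem_replicate (hw'.subset hb)⟩⟩
      obtain ⟨p', j, hp', rfl⟩ := ih hw'
      exact ⟨true :: p', j, by simpa using hp', by simp⟩

theorem exists_of_expandNorth_eq_append_false_cons (hm : 0 < m) {p u z : List Bool}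
    (h : expandNorth m p = u ++ false :: z) :
    ∃ u' z', p = u' ++ false :: z' ∧ u = expandNorth m u' ∧ z = expandNorth m z' := by
  induction p generalizing u with
  | nil => simp at h
  | cons b p ih =>
    cases b
    · rcases u with _ | ⟨c, u⟩
      · exact ⟨[], p, rfl, rfl, by simpa using h.symm⟩
      obtain ⟨rfl, h'⟩ : false = c ∧ expandNorth m p = u ++ false :: z := by simpa using h
      obtain ⟨u', z', rfl, rfl, rfl⟩ := ih h'
      exact ⟨false :: u', z', rfl, rfl, rfl⟩
    rw [expandNorth_cons_true] at h
    rcases List.append_eq_append_iff.1 h with ⟨a, rfl, ha⟩ | ⟨a, hu, ha⟩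
    · obtain ⟨u', z', rfl, rfl, rfl⟩ := ih ha
      exact ⟨true :: u', z', rfl, by simp, rfl⟩
    obtain rfl : a = [] := by
      rcases a with _ | ⟨c, a⟩
      · rfl
      obtain rfl : c = false := (List.cons_eq_cons.1 ha).1.symm
      simpa using (hu ▸ List.mem_append_right u (List.mem_cons_self ..) :
        false ∈ List.replicate m true)
    obtain ⟨u', z', rfl, hu', rfl⟩ := ih (u := []) (by simpa using ha.symm)
    obtain rfl := (expandNorth_eq_nil_iff hm).1 hu'.symm
    exact ⟨[true], z', rfl, by simpa using hu.symm, rfl⟩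

theorem isPrimitive_expandNorth_iff (hm : 0 < m) {d : List Bool} :
    IsPrimitive 1 (expandNorth m d) ↔ IsPrimitive m d := by
  constructor
  · rintro ⟨hne, hbal, hpre⟩
    refine ⟨fun h => hne (by simp [h]), by simpa using hbal, fun q hq hqne hqd => ?_⟩
    have := hpre (expandNorth m q) (by obtain ⟨s, rfl⟩ := hq; simp)
      (by rwa [Ne, expandNorth_eq_nil_iff hm]) ((expandNorth_injective hm).ne hqd)
    simpa using this
  · rintro hd
    refine ⟨by rw [Ne, expandNorth_eq_nil_iff hm]; exact hd.1, by simpa using hd.2.1,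
      fun q hq hqne hqd => ?_⟩
    obtain ⟨d', j, hd', rfl⟩ := exists_eq_expandNorth_of_prefix hq
    rcases eq_or_ne d' [] with rfl | hne
    · simp_all [List.count_replicate]
      omega
    have hd'd : d' ≠ d := by
      rintro rfl
      have := hq.length_le
      simp_all
    have := hd.2.2 d' hd' hne hd'd
    simp [List.count_replicate]; omega

theorem pathRot_expandNorth (hm : 0 < m) {p q : List Bool} (h : PathRot m p q) :
    PathRot 1 (expandNorth m p) (expandNorth m q) := by
  obtain ⟨u, d, v, hd, rfl, rfl⟩ := h
  exact ⟨expandNorth m u, expandNorth m d, expandNorth m v,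
    (isPrimitive_expandNorth_iff hm).2 hd, by simp, by simp⟩

theorem exists_pathRot_of_pathRot_expandNorth (hm : 0 < m) {p w : List Bool}
    (h : PathRot 1 (expandNorth m p) w) : ∃ q, expandNorth m q = w ∧ PathRot m p q := by
  obtain ⟨u, d, v, hd, hp, rfl⟩ := h
  obtain ⟨u, z, rfl, rfl, hz⟩ := exists_of_expandNorth_eq_append_false_cons hm hp
  obtain ⟨d, rfl⟩ := hd.eq_append_false one_pos
  have hz' : expandNorth m z = d ++ false :: v := by rw [← hz]; simp
  obtain ⟨d, v, rfl, rfl, rfl⟩ := exists_of_expandNorth_eq_append_false_cons hm hz'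
  refine ⟨u ++ (d ++ [false]) ++ false :: v, by simp,
    u, d ++ [false], v, (isPrimitive_expandNorth_iff hm).1 (by simpa using hd), by simp, rfl⟩

end ExpandNorth

theorem List.exists_eq_append_true_cons_replicate {p : List Bool} (hp : true ∈ p) :
    ∃ e s, p = e ++ true :: List.replicate s false := by
  obtain ⟨a, b, hab, ha⟩ := List.eq_append_cons_of_mem (List.mem_reverse.2 hp)
  have hrep : a = List.replicate a.length false :=
    List.eq_replicate_iff.2 ⟨rfl, fun x hx => by cases x; rfl; exact absurd hx ha⟩
  refine ⟨b.reverse, a.length, ?_⟩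
  rw [← List.reverse_reverse p, hab, hrep]
  simp

section Ballot

variable {m n : ℕ}

theorem IsBallot.pathRot {p q : List Bool} (hp : IsBallot m n p) (h : PathRot m p q) :
    IsBallot m n q := by
  obtain ⟨u, d, v, hd, rfl, rfl⟩ := h
  obtain ⟨ht, hf, hpre⟩ := hp
  have hu := hpre u (List.prefix_append _ _)
  refine ⟨by simp at ht ⊢; omega, by simp at hf ⊢; omega, fun w hw => ?_⟩
  rw [List.append_assoc] at hw
  rcases List.prefix_or_of_prefix_append hw with hw₁ | ⟨w, rfl, hw₁⟩
  · exact hpre w (hw₁.trans (List.prefix_append _ _))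
  rcases List.prefix_or_of_prefix_append hw₁ with hw₂ | ⟨w, rfl, hw₂⟩
  · have := hd.count_false_le hw₂
    simp [Nat.mul_add]; omega
  rcases List.prefix_cons_iff.1 hw₂ with rfl | ⟨w, rfl, s, rfl⟩
  · have := hd.2.1
    simp [Nat.mul_add]; omega
  · have := hpre (u ++ false :: (d ++ w)) ⟨s, by simp⟩
    simp [Nat.mul_add] at this ⊢; omega

theorem IsBallot.reflTransGen {p q : List Bool} (hp : IsBallot m n p)
    (h : Relation.ReflTransGen (PathRot m) p q) : IsBallot m n q := by
  induction h with
  | refl => exact hp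
  | tail _ h ih => exact ih.pathRot h

theorem IsBallot.of_rotated {u d v : List Bool} (hd : IsPrimitive m d)
    (h : IsBallot m n (u ++ d ++ false :: v)) : IsBallot m n (u ++ false :: (d ++ v)) := by
  obtain ⟨ht, hf, hpre⟩ := h
  have hu : u.count false + 1 ≤ m * u.count true := by
    have := hpre (u ++ d ++ [false]) ⟨v, by simp⟩
    have := hd.2.1
    simp [Nat.mul_add] at *; omega
  refine ⟨by simp at ht ⊢; omega, by simp at hf ⊢; omega, fun w hw => ?_⟩
  rcases List.prefix_or_of_prefix_append hw with hw₁ | ⟨w, rfl, hw₁⟩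
  · exact hpre w (hw₁.trans (by simp))
  rcases List.prefix_cons_iff.1 hw₁ with rfl | ⟨w, rfl, hw₂⟩
  · simp; omega
  rcases List.prefix_or_of_prefix_append hw₂ with hw₃ | ⟨w, rfl, s, rfl⟩
  · have := hd.count_false_le hw₃
    simp [Nat.mul_add]; omega
  · have := hpre (u ++ d ++ false :: w) ⟨s, by simp⟩
    simp [Nat.mul_add] at this ⊢; omega

def minPath (m : ℕ) : ℕ → List Bool
  | 0 => []
  | n + 1 => minPath m n ++ true :: List.replicate m false

theorem isBallot_minPath (m n : ℕ) : IsBallot m n (minPath m n) := by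
  induction n with
  | zero => exact ⟨rfl, rfl, fun q hq => by simp_all [minPath]⟩
  | succ n ih =>
    obtain ⟨ht, hf, hpre⟩ := ih
    refine ⟨by simp [minPath, ht, List.count_replicate], by simp [minPath, hf, Nat.mul_add],
      fun q hq => ?_⟩
    rcases List.prefix_or_of_prefix_append hq with hq₁ | ⟨q, rfl, hq₁⟩
    · exact hpre q hq₁
    have := (isPrimitive_north_east_pow m).count_false_le hq₁
    have := hpre _ List.prefix_rfl
    simp [Nat.mul_add] at *; omega

theorem IsBallot.eq_minPath_or_exists {p : List Bool} (hp : IsBallot m n p) :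
    p = minPath m n ∨ ∃ u v, p = u ++ (true :: List.replicate m false) ++ false :: v := by
  induction n generalizing p with
  | zero =>
    obtain ⟨ht, hf, -⟩ := hp
    exact .inl <| List.eq_nil_iff_forall_not_mem.2 fun b hb => by
      cases b <;> simp_all [List.count_eq_zero]
  | succ n ih =>
    obtain ⟨ht, hf, hpre⟩ := hp
    -- `p = e N E^s` with `s ≥ m`: either `s > m` exhibits the factor, or `e` is ballot of size `n`
    obtain ⟨e, s, rfl⟩ := List.exists_eq_append_true_cons_replicate
      (List.count_pos_iff.1 (by omega : 0 < p.count true))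
    simp [List.count_replicate, Nat.mul_add] at ht hf
    have he : e.count false ≤ m * n := ht ▸ hpre e (List.prefix_append _ _)
    rcases Nat.lt_or_ge m s with hs | hs
    · refine .inr ⟨e, List.replicate (s - m - 1) false, ?_⟩
      rw [List.append_assoc, List.cons_append, ← List.replicate_succ, ← List.replicate_add]
      congr 3
      omega
    obtain rfl : m = s := by omega
    have heb : IsBallot m n e :=
      ⟨ht, by omega, fun q hq => hpre q (hq.trans (List.prefix_append _ _))⟩
    rcases ih heb with rfl | ⟨u, v, rfl⟩
    · exact .inl rfl
    · exact .inr ⟨u, v ++ true :: List.replicate m false, by simp⟩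

def area : List Bool → ℕ
  | [] => 0
  | true :: p => p.count false + area p
  | false :: p => area p

theorem area_append (x y : List Bool) :
    area (x ++ y) = area x + area y + x.count true * y.count false := by
  induction x with
  | nil => simp [area]
  | cons b x ih => cases b <;> simp [area, ih]; ring

theorem area_rotate (u d v : List Bool) :
    area (u ++ false :: (d ++ v)) + d.count true = area (u ++ d ++ false :: v) := by
  simp [area_append, area]
  ring

theorem PathRot.area_lt {p q : List Bool} (h : PathRot m p q) : area p < area q := by
  obtain ⟨u, d, v, hd, rfl, rfl⟩ := h
  have := area_rotate u d v
  have := hd.count_true_pos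
  omega

theorem IsBallot.reflTransGen_minPath {p : List Bool} (hp : IsBallot m n p) :
    Relation.ReflTransGen (PathRot m) (minPath m n) p := by
  induction hk : area p using Nat.strong_induction_on generalizing p with
  | _ k ih =>
  rcases hp.eq_minPath_or_exists with rfl | ⟨u, v, rfl⟩
  · exact .refl
  have hrot : PathRot m (u ++ false :: (true :: List.replicate m false ++ v))
      (u ++ (true :: List.replicate m false) ++ false :: v) :=
    ⟨u, _, v, isPrimitive_north_east_pow m, rfl, rfl⟩
  exact (ih _ (hk ▸ hrot.area_lt) (hp.of_rotated (isPrimitive_north_east_pow m)) rfl).tail hrot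

end Ballot

namespace Tree0

variable {m : ℕ}

theorem word_comb (hm : 0 < m) (n : ℕ) : word (comb n m) = expandNorth m (minPath m n) := by
  obtain ⟨m, rfl⟩ : ∃ k, m = k + 1 := ⟨m - 1, by omega⟩
  induction n with
  | zero => rfl
  | succ n ih =>
    simp [comb, minPath, ih, word_rightChain, List.replicate_succ, ← List.replicate_succ']

theorem exists_rot_of_pathRot (hm : 0 < m) {p p' : List Bool} {t : Tree0}
    (ht : word t = expandNorth m p) (h : PathRot m p p') :
    ∃ t', word t' = expandNorth m p' ∧ Rot t t' := by
  obtain ⟨u, d, v, hd, h₁, h₂⟩ := pathRot_expandNorth hm h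
  obtain ⟨t', hrot, ht'⟩ := exists_rot_of_word_eq hd (ht.trans h₁)
  exact ⟨t', ht'.trans h₂.symm, hrot⟩

theorem exists_pathRot_of_rot (hm : 0 < m) {p : List Bool} {t t' : Tree0}
    (ht : word t = expandNorth m p) (h : Rot t t') :
    ∃ p', word t' = expandNorth m p' ∧ PathRot m p p' := by
  obtain ⟨q, hq, hpq⟩ := exists_pathRot_of_pathRot_expandNorth hm (ht ▸ h.pathRot_word)
  exact ⟨q, hq.symm, hpq⟩

end Tree0

/-- The `m`-Tamari lattice `T_n^{(m)}` on `m`-ballot paths of size `n`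
is isomorphic to the upper ideal of the ordinary Tamari lattice on binary trees with
`nm` nodes generated by the `(n,m)`-comb. -/
theorem mTamari_iso_upper_ideal (m n : ℕ) (hm : 0 < m) :
    ∃ f : {p : List Bool // IsBallot m n p} ≃
          {t : Tree0 // Tree0.tamariLE (Tree0.comb n m) t},
      ∀ p q : {p : List Bool // IsBallot m n p},
        Relation.ReflTransGen (fun a b : {p : List Bool // IsBallot m n p} =>
            PathRot m a.1 b.1) p q ↔ Tree0.tamariLE (f p).1 (f q).1 := by
  obtain ⟨f, hf⟩ := Relation.exists_equiv_reachable_of_bisimulation (r := PathRot m)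
    (s := Tree0.Rot) (C := fun p t => Tree0.word t = expandNorth m p)
    (fun _ _ _ => Tree0.exists_rot_of_pathRot hm) (fun _ _ _ => Tree0.exists_pathRot_of_rot hm)
    (fun _ _ _ h h' => expandNorth_injective hm (h.symm.trans h'))
    (fun _ _ _ h h' => Tree0.word_injective (h.trans h'.symm)) (Tree0.word_comb hm n)
  have hballot (p : List Bool) :
      IsBallot m n p ↔ Relation.ReflTransGen (PathRot m) (minPath m n) p :=
    ⟨IsBallot.reflTransGen_minPath, (isBallot_minPath m n).reflTransGen⟩
  exact ⟨(Equiv.subtypeEquivRight hballot).trans f, fun p q =>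
    (Relation.reflTransGen_subtype_iff fun _ _ h hp => hp.pathRot h).trans
      (hf (Equiv.subtypeEquivRight hballot p) (Equiv.subtypeEquivRight hballot q))⟩
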